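/- Under conditional independence of T and C given X = x, the conditional subdistribution H₁^x(t) = P(Y ≤ t, Δ = 1 | X = x) satisfies H₁^x(t) = ∫_{[0,t]} (1 − Q^x_−(u)) dF^x(u), where Q^x_− denotes the left-continuous version of Q^x. -/

import Mathlib

/-!
By independence the joint law of `(T, C)` is the product of their laws, so Fubini gives
`P(T ∈ A, T ≤ C) = ∫_A P(C ≥ u) dF(u)`. Since `T ≥ 0`, the event `{Y ≤ t, Δ = 1}` is
`{T ∈ [0, t], T ≤ C}`, and `P(C ≥ u) = 1 - Q₋(u)` because `Q` is the Stieltjes function of the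
law of `C`.
-/

open MeasureTheory ProbabilityTheory Set

lemma one_sub_leftLim_cdf (ρ : Measure ℝ) [IsProbabilityMeasure ρ] (u : ℝ) :
    1 - Function.leftLim (cdf ρ) u = ρ.real (Ici u) := by
  have h := (cdf ρ).measure_Ici (tendsto_cdf_atTop ρ) u
  rw [measure_cdf] at h
  rw [measureReal_def, h, ENNReal.toReal_ofReal]
  exact sub_nonneg.2 ((cdf ρ).mono.leftLim_le le_rfl |>.trans (cdf_le_one ρ u))

lemma ProbabilityTheory.IndepFun.measure_mem_inter_le_eq_lintegral {Ω : Type*} [MeasurableSpace Ω]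
    {μ : Measure Ω} [IsFiniteMeasure μ] {T C : Ω → ℝ} (hT : Measurable T) (hC : Measurable C)
    (h_indep : IndepFun T C μ) {A : Set ℝ} (hA : MeasurableSet A) :
    μ {ω | T ω ∈ A ∧ T ω ≤ C ω} = ∫⁻ u in A, μ.map C (Ici u) ∂μ.map T := by
  have hS : MeasurableSet {p : ℝ × ℝ | p.1 ∈ A ∧ p.1 ≤ p.2} :=
    (measurable_fst hA).inter (measurableSet_le measurable_fst measurable_snd)
  have hsection (u : ℝ) : μ.map C (Prod.mk u ⁻¹' {p : ℝ × ℝ | p.1 ∈ A ∧ p.1 ≤ p.2}) =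
      A.indicator (fun u ↦ μ.map C (Ici u)) u := by
    by_cases hu : u ∈ A <;> simp [hu, Set.indicator, Ici_def]
  rw [← lintegral_indicator hA, ← lintegral_congr hsection, ← Measure.prod_apply hS,
    ← (indepFun_iff_map_prod_eq_prod_map_map hT.aemeasurable hC.aemeasurable).1 h_indep,
    Measure.map_apply (hT.prodMk hC) hS]
  rfl

theorem stmt_3_general {Ω : Type*} [MeasurableSpace Ω] (μ : Measure Ω) [IsProbabilityMeasure μ]
    (T C : Ω → ℝ) (hT : Measurable T) (hC : Measurable C)
    (hT_nonneg : ∀ ω, 0 ≤ T ω)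
    (h_indep : IndepFun T C μ)
    (Q Qm H₁ : ℝ → ℝ)
    (hQ : ∀ t, Q t = (μ {ω | C ω ≤ t}).toReal)
    (hQm : ∀ u, Qm u = Function.leftLim Q u)
    (hH₁ : ∀ t, H₁ t = (μ {ω | min (T ω) (C ω) ≤ t ∧ T ω ≤ C ω}).toReal) :
    ∀ t, H₁ t = ∫ u in Set.Icc 0 t, (1 - Qm u) ∂(Measure.map T μ) := by
  intro t
  have : IsProbabilityMeasure (μ.map C) := Measure.isProbabilityMeasure_map hC.aemeasurable
  have hQ_cdf : Q = cdf (μ.map C) := funext fun s ↦ by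
    rw [hQ, cdf_eq_real, measureReal_def, Measure.map_apply hC measurableSet_Iic]; rfl
  have hevent : {ω | min (T ω) (C ω) ≤ t ∧ T ω ≤ C ω} = {ω | T ω ∈ Icc 0 t ∧ T ω ≤ C ω} := by
    ext ω
    simp only [mem_ofPred_eq, mem_Icc, hT_nonneg ω, true_and]
    constructor <;> rintro ⟨h, hle⟩ <;> simp_all
  have hmeas : Measurable fun u : ℝ ↦ μ.map C (Ici u) :=
    Antitone.measurable fun _ _ hab ↦ measure_mono (Ici_subset_Ici.2 hab)
  simp_rw [hQm, hQ_cdf, one_sub_leftLim_cdf, measureReal_def]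
  rw [hH₁, hevent, h_indep.measure_mem_inter_le_eq_lintegral hT hC measurableSet_Icc,
    integral_toReal hmeas.aemeasurable (ae_of_all _ fun _ ↦ measure_lt_top _ _)]

/-- Under (conditional) independence of `T` and `C`, the subdistribution
`H₁(t) = P(Y ≤ t, Δ = 1)` of `(Y, Δ) = (min(T,C), 1{T ≤ C})` satisfies
`H₁(t) = ∫_{[0,t]} (1 − Q₋(u)) dF(u)`, where `F` is the law of `T` (so `dF` is the measure
`μ.map T`) and `Q₋` is the left-continuous version of the CDF `Q` of `C`. -/
theorem stmt_3 {Ω : Type*} [MeasurableSpace Ω] (μ : Measure Ω) [IsProbabilityMeasure μ]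
    (T C : Ω → ℝ) (hT : Measurable T) (hC : Measurable C)
    (hT_nonneg : ∀ ω, 0 ≤ T ω) (hC_nonneg : ∀ ω, 0 ≤ C ω)
    (h_indep : IndepFun T C μ)
    (Q Qm H₁ : ℝ → ℝ)
    (hQ : ∀ t, Q t = (μ {ω | C ω ≤ t}).toReal)
    (hQm : ∀ u, Qm u = Function.leftLim Q u)
    (hH₁ : ∀ t, H₁ t = (μ {ω | min (T ω) (C ω) ≤ t ∧ T ω ≤ C ω}).toReal) :
    ∀ t, H₁ t = ∫ u in Set.Icc 0 t, (1 - Qm u) ∂(Measure.map T μ) :=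
  stmt_3_general μ T C hT hC hT_nonneg h_indep Q Qm H₁ hQ hQm hH₁
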